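/- arXiv:1303.5591 — 2 statements merged into one kernel-verified Lean document; each statement's English description precedes it below -/
import Mathlib

section
/- Fix n ∈ ℕ and ε ∈ [0, 1/2]. If P is an extreme point of the set of probability distributions on {0,1}^n satisfying the Santha–Vazirani condition with parameter ε, then for every 0 ≤ i < n and every prefix (x_1,…,x_i) with positive marginal probability, the conditional probability P(X_{i+1} = 0 | X_1 = x_1, …, X_i = x_i) equals either 1/2 + ε or 1/2 − ε. -/
open Finset

/-- Hamming weight of a binary string. -/
def hammingWeight {n : ℕ} (x : Fin n → Bool) : ℕ :=
  (Finset.univ.filter (fun j => x j = true)).card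

/-- The Bernoulli distribution with parameter `p₊ = 1/2 + ε` on `{0,1}^n`:
`B(x) = (1/2+ε)^(n−w(x)) (1/2−ε)^(w(x))`. -/
noncomputable def bern (n : ℕ) (ε : ℝ) (x : Fin n → Bool) : ℝ :=
  (1/2 + ε) ^ (n - hammingWeight x) * (1/2 - ε) ^ (hammingWeight x)

/-- Marginal probability of a prefix `y` of length `i` under `P`. -/
noncomputable def prefMarg {n : ℕ} (P : (Fin n → Bool) → ℝ) {i : ℕ} (h : i ≤ n)
    (y : Fin i → Bool) : ℝ :=
  ∑ x ∈ Finset.univ.filter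
      (fun x : Fin n → Bool => ∀ j : Fin i, x (Fin.castLE h j) = y j), P x

/-- `P` is a probability distribution on `{0,1}^n` satisfying the Santha–Vazirani
condition with parameter `ε`: every conditional probability of the next bit given
a prefix of positive probability lies in `[1/2−ε, 1/2+ε]`. -/
noncomputable def IsSV (n : ℕ) (ε : ℝ) (P : (Fin n → Bool) → ℝ) : Prop :=
  (∀ x, 0 ≤ P x) ∧ (∑ x, P x = 1) ∧
  ∀ (i : ℕ) (hi : i < n) (y : Fin i → Bool),
    0 < prefMarg P hi.le y → ∀ b : Bool,
      1/2 - ε ≤ prefMarg P hi (Fin.snoc y b) / prefMarg P hi.le y ∧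
      prefMarg P hi (Fin.snoc y b) / prefMarg P hi.le y ≤ 1/2 + ε

/-- The set of SV distributions with parameter `ε` on `{0,1}^n`. -/
noncomputable def SVset (n : ℕ) (ε : ℝ) : Set ((Fin n → Bool) → ℝ) :=
  {P | IsSV n ε P}

/-- The `K`-th Ky Fan norm of `Q` : the sum of the `K` largest values of `Q`
(with multiplicity), i.e. the maximal sum of `Q` over subsets of cardinality `K`. -/
noncomputable def kyFan {Z : Type*} [Fintype Z] (K : ℕ) (Q : Z → ℝ) : ℝ :=
  sSup ((fun S : Finset Z => ∑ z ∈ S, Q z) '' {S : Finset Z | S.card = K})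

/-! If the conditional probability of `0` after the prefix `y` lies strictly inside
`(1/2 - ε, 1/2 + ε)`, move a small mass `s` from the cylinder of `snoc y true` to that of
`snoc y false`, rescaling each of the two cylinders so that all conditional probabilities inside
it are unchanged. Only the conditional probability at `y` moves, so for small `s` both shifts by
`s` and by `-s` are SV distributions, and `P` is their midpoint. -/

lemma Fin.take_snoc {α : Type*} {m j : ℕ} (h : m ≤ j) (z : Fin j → α) (b : α) :
    Fin.take m (h.trans j.le_succ) (Fin.snoc z b : Fin (j + 1) → α) = Fin.take m h z := by
  ext k
  exact Fin.snoc_castSucc (α := fun _ => α) b z (Fin.castLE h k)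

section Marginals

variable {n : ℕ}

lemma prefMarg_eq_sum_take (P : (Fin n → Bool) → ℝ) {i : ℕ} (h : i ≤ n)
    (y : Fin i → Bool) :
    prefMarg P h y = ∑ x with Fin.take i h x = y, P x := by
  simp only [prefMarg, funext_iff, Fin.take_apply]

lemma prefMarg_nonneg {P : (Fin n → Bool) → ℝ} (hP : ∀ x, 0 ≤ P x) {i : ℕ} (h : i ≤ n)
    (y : Fin i → Bool) : 0 ≤ prefMarg P h y :=
  sum_nonneg fun x _ => hP x

lemma prefMarg_zero (P : (Fin n → Bool) → ℝ) (y : Fin 0 → Bool) :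
    prefMarg P n.zero_le y = ∑ x, P x := by
  rw [prefMarg_eq_sum_take, filter_true_of_mem fun x _ => Subsingleton.elim _ _]

lemma prefMarg_eq_sum_prefMarg (P : (Fin n → Bool) → ℝ) {j m : ℕ} (hjm : j ≤ m)
    (hm : m ≤ n) (hj : j ≤ n) (z : Fin j → Bool) :
    prefMarg P hj z = ∑ w with Fin.take j hjm w = z, prefMarg P hm w := by
  simp only [prefMarg_eq_sum_take]
  rw [sum_fiberwise_eq_sum_filter]
  simp only [mem_filter, mem_univ, true_and, Fin.take_take]

lemma prefMarg_eq_add_snoc (P : (Fin n → Bool) → ℝ) {i : ℕ} (hi : i < n)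
    (y : Fin i → Bool) :
    prefMarg P hi.le y = prefMarg P hi (Fin.snoc y false) + prefMarg P hi (Fin.snoc y true) := by
  have hfiber : univ.filter (fun w : Fin (i + 1) → Bool => Fin.take i i.le_succ w = y) =
      {Fin.snoc y false, Fin.snoc y true} := by
    ext w
    rw [mem_filter]
    simp only [Fin.take_eq_init, mem_univ, true_and, mem_insert, mem_singleton]
    constructor
    · rintro rfl
      rw [← Fin.snoc_init_self w]
      cases w (Fin.last i) <;> simp
    · rintro (rfl | rfl) <;> exact Fin.init_snoc _ _
  rw [prefMarg_eq_sum_prefMarg P i.le_succ hi, hfiber, sum_pair]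
  simp [Fin.snoc_inj]

lemma prefMarg_snoc_le {P : (Fin n → Bool) → ℝ} (hP : ∀ x, 0 ≤ P x) {i : ℕ} (hi : i < n)
    (y : Fin i → Bool) (b : Bool) : prefMarg P hi (Fin.snoc y b) ≤ prefMarg P hi.le y := by
  have h0 := prefMarg_nonneg hP hi (Fin.snoc y false)
  have h1 := prefMarg_nonneg hP hi (Fin.snoc y true)
  rw [prefMarg_eq_add_snoc P hi y]
  cases b <;> linarith

lemma prefMarg_congr_of_le {P Q : (Fin n → Bool) → ℝ} {m : ℕ} (hm : m ≤ n)
    (hPQ : ∀ w : Fin m → Bool, prefMarg Q hm w = prefMarg P hm w) {j : ℕ} (hjm : j ≤ m)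
    (hj : j ≤ n) (z : Fin j → Bool) : prefMarg Q hj z = prefMarg P hj z := by
  simp only [prefMarg_eq_sum_prefMarg _ hjm hm, hPQ]

lemma prefMarg_mul_take_of_le (P : (Fin n → Bool) → ℝ) {m : ℕ} (hm : m ≤ n)
    (φ : (Fin m → Bool) → ℝ) {j : ℕ} (hmj : m ≤ j) (hj : j ≤ n) (z : Fin j → Bool) :
    prefMarg (fun x => P x * φ (Fin.take m hm x)) hj z =
      φ (Fin.take m hmj z) * prefMarg P hj z := by
  rw [prefMarg_eq_sum_take, prefMarg_eq_sum_take, mul_sum]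
  refine sum_congr rfl fun x hx => ?_
  rw [(mem_filter.mp hx).2.symm, Fin.take_take, mul_comm]

end Marginals

lemma isSV_iff {n : ℕ} {ε : ℝ} {P : (Fin n → Bool) → ℝ} :
    IsSV n ε P ↔ (∀ x, 0 ≤ P x) ∧ ∑ x, P x = 1 ∧
      ∀ (i : ℕ) (hi : i < n) (y : Fin i → Bool) (b : Bool),
        (1/2 - ε) * prefMarg P hi.le y ≤ prefMarg P hi (Fin.snoc y b) ∧
        prefMarg P hi (Fin.snoc y b) ≤ (1/2 + ε) * prefMarg P hi.le y := by
  refine and_congr_right fun hP => and_congr_right fun _ => forall₃_congr fun i hi y => ?_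
  constructor
  · intro hcond b
    rcases (prefMarg_nonneg hP hi.le y).lt_or_eq with hpos | hzero
    · simpa only [le_div_iff₀ hpos, div_le_iff₀ hpos] using hcond hpos b
    · have hchild : prefMarg P hi (Fin.snoc y b) = 0 :=
        le_antisymm (hzero ▸ prefMarg_snoc_le hP hi y b) (prefMarg_nonneg hP hi _)
      simp [← hzero, hchild]
  · intro hcond hpos b
    rw [le_div_iff₀ hpos, div_le_iff₀ hpos]
    exact hcond b

section MassShift

variable {n i : ℕ}

noncomputable def shiftWeight (y : Fin i → Bool) (A B s : ℝ) (w : Fin (i + 1) → Bool) : ℝ :=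
  if w = Fin.snoc y false then 1 + s / A else if w = Fin.snoc y true then 1 - s / B else 1

noncomputable def shiftMass (P : (Fin n → Bool) → ℝ) (hi : i < n) (y : Fin i → Bool)
    (s : ℝ) : (Fin n → Bool) → ℝ := fun x =>
  P x * shiftWeight y (prefMarg P hi (Fin.snoc y false)) (prefMarg P hi (Fin.snoc y true)) s
    (Fin.take (i + 1) hi x)

variable (P : (Fin n → Bool) → ℝ) (hi : i < n) (y : Fin i → Bool)

lemma midpoint_shiftMass (s : ℝ) :
    (1/2 : ℝ) • shiftMass P hi y s + (1/2 : ℝ) • shiftMass P hi y (-s) = P := by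
  ext x
  simp only [shiftMass, shiftWeight, Pi.add_apply, Pi.smul_apply, smul_eq_mul]
  split_ifs <;> ring

lemma prefMarg_shiftMass_of_lt {s : ℝ} {j : ℕ} (hij : i < j) (hj : j ≤ n)
    (z : Fin j → Bool) :
    prefMarg (shiftMass P hi y s) hj z =
      shiftWeight y (prefMarg P hi (Fin.snoc y false)) (prefMarg P hi (Fin.snoc y true)) s
        (Fin.take (i + 1) hij z) * prefMarg P hj z :=
  prefMarg_mul_take_of_le P hi _ hij hj z

lemma prefMarg_shiftMass_snoc_false {s : ℝ} (hA : prefMarg P hi (Fin.snoc y false) ≠ 0) :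
    prefMarg (shiftMass P hi y s) hi (Fin.snoc y false) = prefMarg P hi (Fin.snoc y false) + s := by
  rw [prefMarg_shiftMass_of_lt P hi y i.lt_succ_self, Fin.take_eq_self, shiftWeight, if_pos rfl]
  field_simp

lemma prefMarg_shiftMass_snoc_true {s : ℝ} (hB : prefMarg P hi (Fin.snoc y true) ≠ 0) :
    prefMarg (shiftMass P hi y s) hi (Fin.snoc y true) = prefMarg P hi (Fin.snoc y true) - s := by
  rw [prefMarg_shiftMass_of_lt P hi y i.lt_succ_self, Fin.take_eq_self, shiftWeight,
    if_neg (by simp [Fin.snoc_inj]), if_pos rfl]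
  field_simp

lemma prefMarg_shiftMass_snoc_of_ne {s : ℝ} {z : Fin i → Bool} (hz : z ≠ y) (b : Bool) :
    prefMarg (shiftMass P hi y s) hi (Fin.snoc z b) = prefMarg P hi (Fin.snoc z b) := by
  rw [prefMarg_shiftMass_of_lt P hi y i.lt_succ_self, Fin.take_eq_self, shiftWeight,
    if_neg (by simp [Fin.snoc_inj, hz]), if_neg (by simp [Fin.snoc_inj, hz]), one_mul]

lemma prefMarg_shiftMass_of_le {s : ℝ} (hA : prefMarg P hi (Fin.snoc y false) ≠ 0)
    (hB : prefMarg P hi (Fin.snoc y true) ≠ 0) {j : ℕ} (hji : j ≤ i) (hj : j ≤ n)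
    (z : Fin j → Bool) : prefMarg (shiftMass P hi y s) hj z = prefMarg P hj z := by
  refine prefMarg_congr_of_le hi.le (fun w => ?_) hji hj z
  rw [prefMarg_eq_add_snoc _ hi w, prefMarg_eq_add_snoc _ hi w]
  rcases eq_or_ne w y with rfl | hw
  · rw [prefMarg_shiftMass_snoc_false P hi w hA, prefMarg_shiftMass_snoc_true P hi w hB]
    ring
  · rw [prefMarg_shiftMass_snoc_of_ne P hi y hw, prefMarg_shiftMass_snoc_of_ne P hi y hw]

lemma isSV_shiftMass {ε s : ℝ} (hε : ε ≤ 1/2) (hP : IsSV n ε P)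
    (hA : 0 < prefMarg P hi (Fin.snoc y false)) (hB : 0 < prefMarg P hi (Fin.snoc y true))
    (hlo : (1/2 - ε) * (prefMarg P hi (Fin.snoc y false) + prefMarg P hi (Fin.snoc y true)) ≤
      prefMarg P hi (Fin.snoc y false) + s)
    (hhi : prefMarg P hi (Fin.snoc y false) + s ≤
      (1/2 + ε) * (prefMarg P hi (Fin.snoc y false) + prefMarg P hi (Fin.snoc y true))) :
    IsSV n ε (shiftMass P hi y s) := by
  rw [isSV_iff] at hP ⊢
  obtain ⟨hP0, hP1, hcond⟩ := hP
  set A := prefMarg P hi (Fin.snoc y false)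
  set B := prefMarg P hi (Fin.snoc y true)
  have hAB : 0 ≤ (1/2 - ε) * (A + B) := mul_nonneg (by linarith) (by linarith)
  have hweight : ∀ w, 0 ≤ shiftWeight y A B s w := by
    have hwA : 0 ≤ 1 + s / A := by
      rw [one_add_div hA.ne']
      exact div_nonneg (by linarith) hA.le
    have hwB : 0 ≤ 1 - s / B := by
      rw [one_sub_div hB.ne']
      exact div_nonneg (by linarith) hB.le
    intro w
    unfold shiftWeight
    split_ifs <;> first | assumption | exact zero_le_one
  refine ⟨fun x => mul_nonneg (hP0 x) (hweight _), ?_, fun j hj z b => ?_⟩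
  · rw [← prefMarg_zero _ Fin.elim0, prefMarg_shiftMass_of_le P hi y hA.ne' hB.ne' i.zero_le,
      prefMarg_zero, hP1]
  rcases lt_trichotomy j i with hji | rfl | hij
  · rw [prefMarg_shiftMass_of_le P hi y hA.ne' hB.ne' hji.le,
      prefMarg_shiftMass_of_le P hi y hA.ne' hB.ne' hji]
    exact hcond j hj z b
  · rw [prefMarg_shiftMass_of_le P hi y hA.ne' hB.ne' le_rfl]
    rcases eq_or_ne z y with rfl | hz
    · rw [prefMarg_eq_add_snoc P hi z]
      cases b
      · rw [prefMarg_shiftMass_snoc_false P hi z hA.ne']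
        constructor <;> linarith
      · rw [prefMarg_shiftMass_snoc_true P hi z hB.ne']
        constructor <;> linarith
    · rw [prefMarg_shiftMass_snoc_of_ne P hi y hz]
      exact hcond j hj z b
  · rw [prefMarg_shiftMass_of_lt P hi y hij,
      prefMarg_shiftMass_of_lt P hi y (hij.trans j.lt_succ_self),
      Fin.take_snoc hij z b, mul_left_comm (1/2 - ε), mul_left_comm (1/2 + ε)]
    obtain ⟨hzlo, hzhi⟩ := hcond j hj z b
    exact ⟨mul_le_mul_of_nonneg_left hzlo (hweight _),
      mul_le_mul_of_nonneg_left hzhi (hweight _)⟩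

end MassShift

lemma notMem_extremePoints_of_lt_of_lt {n : ℕ} {ε : ℝ} (hε : ε ≤ 1/2)
    {P : (Fin n → Bool) → ℝ} (hP : IsSV n ε P) {i : ℕ} (hi : i < n) (y : Fin i → Bool)
    (hlo : (1/2 - ε) * prefMarg P hi.le y < prefMarg P hi (Fin.snoc y false))
    (hhi : prefMarg P hi (Fin.snoc y false) < (1/2 + ε) * prefMarg P hi.le y) :
    P ∉ (SVset n ε).extremePoints ℝ := by
  rw [prefMarg_eq_add_snoc P hi y] at hlo hhi
  set A := prefMarg P hi (Fin.snoc y false)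
  set B := prefMarg P hi (Fin.snoc y true)
  have hAB : 0 ≤ (1/2 - ε) * (A + B) := mul_nonneg (by linarith)
    (add_nonneg (prefMarg_nonneg hP.1 hi _) (prefMarg_nonneg hP.1 hi _))
  have hA : 0 < A := by linarith
  have hB : 0 < B := by linarith
  set t := min (A - (1/2 - ε) * (A + B)) ((1/2 + ε) * (A + B) - A)
  have ht : 0 < t := lt_min (by linarith) (by linarith)
  have htlo : t ≤ A - (1/2 - ε) * (A + B) := min_le_left _ _
  have hthi : t ≤ (1/2 + ε) * (A + B) - A := min_le_right _ _
  intro hext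
  obtain ⟨hshift, -⟩ := (mem_extremePoints.mp hext).2 _
    (isSV_shiftMass P hi y (s := t) hε hP hA hB (by linarith) (by linarith)) _
    (isSV_shiftMass P hi y (s := -t) hε hP hA hB (by linarith) (by linarith))
    ⟨1/2, 1/2, by norm_num, by norm_num, by norm_num, midpoint_shiftMass P hi y t⟩
  have hmass := congrArg (fun Q => prefMarg Q hi (Fin.snoc y false)) hshift
  simp only [prefMarg_shiftMass_snoc_false P hi y hA.ne'] at hmass
  linarith

theorem sv_extreme_points_conditionals_extremal_general
    (n : ℕ) (ε : ℝ) (hε : ε ≤ 1/2)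
    (P : (Fin n → Bool) → ℝ) (hP : P ∈ Set.extremePoints ℝ (SVset n ε))
    (i : ℕ) (hi : i < n) (y : Fin i → Bool) (hy : 0 < prefMarg P hi.le y) :
    prefMarg P hi (Fin.snoc y false) / prefMarg P hi.le y = 1/2 + ε ∨
    prefMarg P hi (Fin.snoc y false) / prefMarg P hi.le y = 1/2 - ε := by
  have hSV : IsSV n ε P := hP.1
  obtain ⟨hlo, hhi⟩ := hSV.2.2 i hi y hy false
  by_contra! hne
  refine notMem_extremePoints_of_lt_of_lt hε hSV hi y ?_ ?_ hP
  · rw [← lt_div_iff₀ hy]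
    exact lt_of_le_of_ne hlo (Ne.symm hne.2)
  · rw [← div_lt_iff₀ hy]
    exact lt_of_le_of_ne hhi hne.1

/-- for an extreme point of the SV set, every conditional probability
of the next bit being 0 given a positive-probability prefix equals 1/2 + ε or 1/2 − ε. -/
theorem sv_extreme_points_conditionals_extremal
    (n : ℕ) (ε : ℝ) (hε0 : 0 ≤ ε) (hε : ε ≤ 1/2)
    (P : (Fin n → Bool) → ℝ) (hP : P ∈ Set.extremePoints ℝ (SVset n ε))
    (i : ℕ) (hi : i < n) (y : Fin i → Bool) (hy : 0 < prefMarg P hi.le y) :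
    prefMarg P hi (Fin.snoc y false) / prefMarg P hi.le y = 1/2 + ε ∨
    prefMarg P hi (Fin.snoc y false) / prefMarg P hi.le y = 1/2 - ε :=
  sv_extreme_points_conditionals_extremal_general n ε hε P hP i hi y hy
end

section
/- Fix n ∈ ℕ, ε ∈ [0, 1/2), 1 ≤ K ≤ 2^n, and m < n. Write p₊ = 1/2 + ε, p₋ = 1/2 − ε, and α = (m/(n−m)) · (1+2ε)/(1−2ε), and suppose α < 1 and ∑_{i=0}^{m} C(n,i) ≥ K. Let B be the Bernoulli distribution with parameter p₊ on {0,1}^n. Then the K-th Ky Fan norm of B satisfies ‖B‖_K ≤ ∑_{i=0}^{m} C(n,i) p₋^{i} p₊^{n−i} ≤ (1/(1−α)) · C(n,m) p₋^{m} p₊^{n−m}. (In particular, with n = 2r and m = cr this gives the constant k = (2−c)(1−2ε)/(2(1−c−2ε)) of Lemma 2 of the paper.) -/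
open Finset

/-! The Bernoulli weight of a string only decreases with its Hamming weight, so the set `T` of
strings of weight at most `m` is an upper level set of `B`; since `|T| = ∑_{i ≤ m} C(n,i) ≥ K`,
exchanging the elements of a `K`-set outside `T` for unused elements of `T` shows that no `K`-set
weighs more than `T`. For `i < m` the ratio of consecutive terms `C(n,i) p₋^i p₊^(n-i)` of the
binomial sum is `(i+1)/(n-i) · p₊/p₋ ≤ α`, so the sum is dominated by a geometric series with
ratio `α` starting from its last term. -/

theorem Finset.sum_le_sum_of_card_le_of_threshold {Z : Type*} {Q : Z → ℝ} {S T : Finset Z}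
    {c : ℝ} (hc : 0 ≤ c) (hST : #S ≤ #T) (hout : ∀ z ∉ T, Q z ≤ c) (hin : ∀ z ∈ T, c ≤ Q z) :
    ∑ z ∈ S, Q z ≤ ∑ z ∈ T, Q z := by
  classical
  have hcard : #(S \ T) ≤ #(T \ S) := by
    have := card_sdiff_add_card_inter S T
    have := card_sdiff_add_card_inter T S
    rw [inter_comm] at this
    omega
  have hmove : ∑ z ∈ S \ T, Q z ≤ ∑ z ∈ T \ S, Q z :=
    calc ∑ z ∈ S \ T, Q z ≤ #(S \ T) • c :=
          sum_le_card_nsmul _ _ _ fun z hz => hout z (mem_sdiff.1 hz).2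
      _ ≤ #(T \ S) • c := nsmul_le_nsmul_left hc hcard
      _ ≤ ∑ z ∈ T \ S, Q z :=
          card_nsmul_le_sum _ _ _ fun z hz => hin z (mem_sdiff.1 hz).1
  rw [← sum_inter_add_sum_sdiff S T, ← sum_inter_add_sum_sdiff T S, inter_comm T S]
  gcongr

theorem kyFan_le_sum_of_threshold {Z : Type*} [Fintype Z] {K : ℕ} {Q : Z → ℝ} {T : Finset Z}
    {c : ℝ} (hc : 0 ≤ c) (hKT : K ≤ #T) (hout : ∀ z ∉ T, Q z ≤ c) (hin : ∀ z ∈ T, c ≤ Q z) :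
    kyFan K Q ≤ ∑ z ∈ T, Q z := by
  obtain ⟨S₀, -, hS₀⟩ := exists_subset_card_eq hKT
  refine csSup_le ⟨_, S₀, hS₀, rfl⟩ ?_
  rintro _ ⟨S, hS, rfl⟩
  exact sum_le_sum_of_card_le_of_threshold hc (hS ▸ hKT) hout hin

theorem hammingWeight_le {n : ℕ} (x : Fin n → Bool) : hammingWeight x ≤ n :=
  (card_filter_le _ _).trans_eq (card_fin n)

theorem card_filter_hammingWeight_eq (n i : ℕ) :
    #(univ.filter fun x : Fin n → Bool => hammingWeight x = i) = n.choose i := by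
  rw [← card_fin n, ← card_powersetCard, card_fin]
  refine card_bij' (fun x _ => univ.filter fun j => x j = true) (fun s _ j => decide (j ∈ s))
    ?_ ?_ ?_ ?_ <;> simp only [mem_filter, mem_univ, true_and, mem_powersetCard, subset_univ] <;>
    simp +contextual [hammingWeight]

theorem sum_filter_hammingWeight_le {M : Type*} [AddCommMonoid M] (n m : ℕ) (g : ℕ → M) :
    ∑ x ∈ univ.filter (fun x : Fin n → Bool => hammingWeight x ≤ m), g (hammingWeight x) =
      ∑ i ∈ range (m + 1), n.choose i • g i := by
  rw [← sum_fiberwise_of_maps_to (g := hammingWeight) (t := range (m + 1))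
    fun x hx => mem_range_succ_iff.2 (mem_filter.1 hx).2]
  refine sum_congr rfl fun i hi => ?_
  have hfiber : {x ∈ univ.filter (fun x : Fin n → Bool => hammingWeight x ≤ m) |
      hammingWeight x = i} = univ.filter (fun x => hammingWeight x = i) := by
    rw [filter_filter]
    exact filter_congr fun x _ => ⟨And.right, fun h => ⟨h ▸ mem_range_succ_iff.1 hi, h⟩⟩
  rw [hfiber, sum_congr rfl fun x hx => congrArg g (mem_filter.1 hx).2, sum_const,
    card_filter_hammingWeight_eq]

theorem card_filter_hammingWeight_le (n m : ℕ) :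
    #(univ.filter fun x : Fin n → Bool => hammingWeight x ≤ m) =
      ∑ i ∈ range (m + 1), n.choose i := by
  simpa using sum_filter_hammingWeight_le n m fun _ => (1 : ℕ)

theorem pow_sub_mul_pow_le_pow_sub_mul_pow {R : Type*} [CommSemiring R] [PartialOrder R]
    [IsOrderedRing R] {p q : R} (hq : 0 ≤ q) (hqp : q ≤ p) {n a b : ℕ} (hab : a ≤ b)
    (hbn : b ≤ n) : p ^ (n - b) * q ^ b ≤ p ^ (n - a) * q ^ a := by
  obtain ⟨d, rfl⟩ := Nat.exists_eq_add_of_le hab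
  have hp : 0 ≤ p := hq.trans hqp
  calc p ^ (n - (a + d)) * q ^ (a + d) = p ^ (n - (a + d)) * q ^ a * q ^ d := by ring
    _ ≤ p ^ (n - (a + d)) * q ^ a * p ^ d := by gcongr
    _ = p ^ (n - a) * q ^ a := by rw [show n - a = n - (a + d) + d by omega]; ring

theorem choose_mul_pow_le_mul_choose_succ_mul_pow {p q : ℝ} (hp : 0 ≤ p) (hq : 0 < q)
    {n m i : ℕ} (hmn : m < n) (him : i < m) :
    (n.choose i : ℝ) * q ^ i * p ^ (n - i) ≤
      (m / (n - m) * (p / q)) * ((n.choose (i + 1) : ℝ) * q ^ (i + 1) * p ^ (n - (i + 1))) := by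
  have hnm : (0 : ℝ) < n - m := sub_pos.2 (Nat.cast_lt.2 hmn)
  have hnat : n.choose i * (n - m) ≤ n.choose (i + 1) * m :=
    calc n.choose i * (n - m) ≤ n.choose i * (n - i) := Nat.mul_le_mul_left _ (by omega)
      _ = n.choose (i + 1) * (i + 1) := (Nat.choose_succ_right_eq n i).symm
      _ ≤ n.choose (i + 1) * m := Nat.mul_le_mul_left _ him
  have hchoose : (n.choose i : ℝ) ≤ m / (n - m) * n.choose (i + 1) := by
    rw [div_mul_eq_mul_div, le_div_iff₀ hnm]
    have hreal : ((n.choose i * (n - m) : ℕ) : ℝ) ≤ (n.choose (i + 1) * m : ℕ) :=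
      Nat.cast_le.2 hnat
    push_cast [Nat.cast_sub hmn.le] at hreal
    linarith
  calc (n.choose i : ℝ) * q ^ i * p ^ (n - i)
      ≤ (m / (n - m) * n.choose (i + 1)) * q ^ i * p ^ (n - i) := by gcongr
    _ = _ := by
      rw [show n - i = n - (i + 1) + 1 by omega]
      field_simp
      ring

theorem sum_range_succ_le_of_le_mul_succ {K : Type*} [Field K] [LinearOrder K]
    [IsStrictOrderedRing K] {t : ℕ → K} {α : K} {m : ℕ} (hα0 : 0 ≤ α) (hα1 : α < 1)
    (ht : 0 ≤ t m) (hstep : ∀ i < m, t i ≤ α * t (i + 1)) :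
    ∑ i ∈ range (m + 1), t i ≤ 1 / (1 - α) * t m := by
  have hpow : ∀ j ≤ m, t (m - j) ≤ α ^ j * t m := by
    intro j hj
    induction j with
    | zero => simp
    | succ j ih =>
      calc t (m - (j + 1)) ≤ α * t (m - (j + 1) + 1) := hstep _ (by omega)
        _ = α * t (m - j) := by rw [show m - (j + 1) + 1 = m - j by omega]
        _ ≤ α * (α ^ j * t m) := by gcongr; exact ih (by omega)
        _ = α ^ (j + 1) * t m := by ring
  have hgeom : ∑ j ∈ range (m + 1), α ^ j ≤ 1 / (1 - α) := by
    have := geom_sum_Ico_le_of_lt_one (m := 0) (n := m + 1) hα0 hα1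
    rwa [← range_eq_Ico, pow_zero] at this
  calc ∑ i ∈ range (m + 1), t i = ∑ j ∈ range (m + 1), t (m - j) :=
        (sum_range_reflect t (m + 1)).symm
    _ ≤ ∑ j ∈ range (m + 1), α ^ j * t m :=
        sum_le_sum fun j hj => hpow j (mem_range_succ_iff.1 hj)
    _ = (∑ j ∈ range (m + 1), α ^ j) * t m := (sum_mul _ _ _).symm
    _ ≤ 1 / (1 - α) * t m := by gcongr

theorem kyFan_bernoulli_upper_bound_general
    (n : ℕ) (ε : ℝ) (hε0 : 0 ≤ ε) (hε : ε < 1/2)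
    (K : ℕ) (m : ℕ) (hmn : m < n)
    (hα : ((m : ℝ) / ((n : ℝ) - (m : ℝ))) * (1 + 2 * ε) / (1 - 2 * ε) < 1)
    (hsum : K ≤ ∑ i ∈ Finset.range (m + 1), n.choose i) :
    kyFan K (bern n ε) ≤
      (∑ i ∈ Finset.range (m + 1),
        (n.choose i : ℝ) * (1/2 - ε) ^ i * (1/2 + ε) ^ (n - i)) ∧
    (∑ i ∈ Finset.range (m + 1),
        (n.choose i : ℝ) * (1/2 - ε) ^ i * (1/2 + ε) ^ (n - i)) ≤
      (1 / (1 - ((m : ℝ) / ((n : ℝ) - (m : ℝ))) * (1 + 2 * ε) / (1 - 2 * ε))) *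
        ((n.choose m : ℝ) * (1/2 - ε) ^ m * (1/2 + ε) ^ (n - m)) := by
  have hq : (0 : ℝ) < 1/2 - ε := by linarith
  have hp : (0 : ℝ) < 1/2 + ε := by linarith
  have hqp : (1/2 - ε : ℝ) ≤ 1/2 + ε := by linarith
  have hbern_anti {a b : ℕ} (hab : a ≤ b) (hbn : b ≤ n) :=
    pow_sub_mul_pow_le_pow_sub_mul_pow hq.le hqp hab hbn
  constructor
  · calc kyFan K (bern n ε)
        ≤ ∑ x ∈ univ.filter (fun x : Fin n → Bool => hammingWeight x ≤ m), bern n ε x :=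
          kyFan_le_sum_of_threshold (by positivity)
            (hsum.trans (card_filter_hammingWeight_le n m).ge)
            (fun x hx => hbern_anti (not_le.1 (by simpa using hx)).le (hammingWeight_le x))
            (fun x hx => hbern_anti (mem_filter.1 hx).2 hmn.le)
      _ = _ := (sum_filter_hammingWeight_le n m fun w => (1/2 + ε) ^ (n - w) * (1/2 - ε) ^ w).trans
          (sum_congr rfl fun i _ => by rw [nsmul_eq_mul]; ring)
  · have hα_eq : (m : ℝ) / (n - m) * (1 + 2 * ε) / (1 - 2 * ε) =
        m / (n - m) * ((1/2 + ε) / (1/2 - ε)) := by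
      field_simp
    have hnm : (0 : ℝ) ≤ n - m := sub_nonneg.2 (Nat.cast_le.2 hmn.le)
    rw [hα_eq] at hα ⊢
    exact sum_range_succ_le_of_le_mul_succ (by positivity) hα (by positivity)
      fun i him => choose_mul_pow_le_mul_choose_succ_mul_pow hp.le hq hmn him

/-- upper bound on the K-th Ky Fan norm of the Bernoulli distribution
via a geometric series, when α = (m/(n−m))·(1+2ε)/(1−2ε) < 1 and
∑_{i=0}^m C(n,i) ≥ K. -/
theorem kyFan_bernoulli_upper_bound
    (n : ℕ) (ε : ℝ) (hε0 : 0 ≤ ε) (hε : ε < 1/2)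
    (K : ℕ) (hK1 : 1 ≤ K) (hK2 : K ≤ 2 ^ n) (m : ℕ) (hmn : m < n)
    (hα : ((m : ℝ) / ((n : ℝ) - (m : ℝ))) * (1 + 2 * ε) / (1 - 2 * ε) < 1)
    (hsum : K ≤ ∑ i ∈ Finset.range (m + 1), n.choose i) :
    kyFan K (bern n ε) ≤
      (∑ i ∈ Finset.range (m + 1),
        (n.choose i : ℝ) * (1/2 - ε) ^ i * (1/2 + ε) ^ (n - i)) ∧
    (∑ i ∈ Finset.range (m + 1),
        (n.choose i : ℝ) * (1/2 - ε) ^ i * (1/2 + ε) ^ (n - i)) ≤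
      (1 / (1 - ((m : ℝ) / ((n : ℝ) - (m : ℝ))) * (1 + 2 * ε) / (1 - 2 * ε))) *
        ((n.choose m : ℝ) * (1/2 - ε) ^ m * (1/2 + ε) ^ (n - m)) :=
  kyFan_bernoulli_upper_bound_general n ε hε0 hε K m hmn hα hsum
end
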